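/- arXiv:2502.08495 — 5 statements merged into one kernel-verified Lean document; each statement's English description precedes it below -/
import Mathlib

section
/- Let E be an n×n real matrix and let A = I + (p-2)vvᵀ for a unit vector v ∈ ℝⁿ and p > 1. If EA = AEᵀ, then trace(E²) ≥ (2(p-1)/(1+(p-1)²))·‖E‖², where ‖E‖² denotes the squared Frobenius norm trace(EEᵀ). -/
/-!
Write `Σ = E + Eᵀ` and `D = E - Eᵀ`. Since `trace (E²)` and `trace (E Eᵀ)` are
`(‖Σ‖² ∓ ‖D‖²) / 4`, the claim amounts to `p² ‖D‖² ≤ (p - 2)² ‖Σ‖²`. Self-duality forces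
`D = (p - 2) (v uᵀ - u vᵀ)` with `u = E v`, so `‖D‖² = 2 (p - 2)² |u⊥|²`, where `⊥` is the
component orthogonal to `v`. On the other hand `(Σ v)⊥ = p u⊥`, and this vector occurs in the
symmetric matrix `Σ` both as part of a column and of a row, whence `‖Σ‖² ≥ 2 p² |u⊥|²`.
-/

open Matrix

namespace Matrix

variable {m n R : Type*} [Fintype m] [Fintype n]

section CommRing

variable [CommRing R]

theorem trace_mul_transpose_comm (A B : Matrix n m R) : (B * Aᵀ).trace = (A * Bᵀ).trace := by
  rw [← trace_transpose, transpose_mul, transpose_transpose]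

theorem trace_add_mul_transpose_add (A B : Matrix n m R) :
    ((A + B) * (A + B)ᵀ).trace = (A * Aᵀ).trace + 2 * (A * Bᵀ).trace + (B * Bᵀ).trace := by
  rw [transpose_add, Matrix.add_mul, Matrix.mul_add, Matrix.mul_add, trace_add, trace_add,
    trace_add, trace_mul_transpose_comm A B]
  ring

theorem trace_sub_mul_transpose_sub (A B : Matrix n m R) :
    ((A - B) * (A - B)ᵀ).trace = (A * Aᵀ).trace - 2 * (A * Bᵀ).trace + (B * Bᵀ).trace := by
  rw [transpose_sub, Matrix.sub_mul, Matrix.mul_sub, Matrix.mul_sub, trace_sub, trace_sub,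
    trace_sub, trace_mul_transpose_comm A B]
  ring

theorem trace_smul_mul_transpose_smul (c : R) (A : Matrix n m R) :
    (c • A * (c • A)ᵀ).trace = c ^ 2 * (A * Aᵀ).trace := by
  rw [transpose_smul, Matrix.smul_mul, Matrix.mul_smul, smul_smul, trace_smul, smul_eq_mul, sq]

theorem trace_vecMulVec_mul_transpose_vecMulVec (a b c d : n → R) :
    (vecMulVec a b * (vecMulVec c d)ᵀ).trace = (a ⬝ᵥ c) * (b ⬝ᵥ d) := by
  rw [transpose_vecMulVec, vecMulVec_mul_vecMulVec, trace_vecMulVec, dotProduct_smul,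
    smul_eq_mul, mul_comm (b ⬝ᵥ d), dotProduct_comm b d]

theorem trace_vecMulVec_add_mul_transpose (u v : n → R) :
    ((vecMulVec v u + vecMulVec u v) * (vecMulVec v u + vecMulVec u v)ᵀ).trace
      = 2 * ((u ⬝ᵥ u) * (v ⬝ᵥ v) + (u ⬝ᵥ v) ^ 2) := by
  simp only [trace_add_mul_transpose_add, trace_vecMulVec_mul_transpose_vecMulVec,
    dotProduct_comm v u]
  ring

theorem trace_vecMulVec_sub_mul_transpose (u v : n → R) :
    ((vecMulVec v u - vecMulVec u v) * (vecMulVec v u - vecMulVec u v)ᵀ).trace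
      = 2 * ((u ⬝ᵥ u) * (v ⬝ᵥ v) - (u ⬝ᵥ v) ^ 2) := by
  simp only [trace_sub_mul_transpose_sub, trace_vecMulVec_mul_transpose_vecMulVec,
    dotProduct_comm v u]
  ring

variable [DecidableEq n] {c : R} {v : n → R} {E : Matrix n n R}

theorem sub_transpose_eq_of_mul_eq_mul_transpose
    (h : E * (1 + c • vecMulVec v v) = (1 + c • vecMulVec v v) * Eᵀ) :
    E - Eᵀ = c • (vecMulVec v (E *ᵥ v) - vecMulVec (E *ᵥ v) v) := by
  rw [Matrix.mul_add, Matrix.add_mul, Matrix.mul_one, Matrix.one_mul, Matrix.mul_smul,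
    Matrix.smul_mul, mul_vecMulVec, vecMulVec_mul, vecMul_transpose] at h
  rw [smul_sub, sub_eq_sub_iff_add_eq_add, h, add_comm]

theorem add_transpose_mulVec_of_mul_eq_mul_transpose (hv : v ⬝ᵥ v = 1)
    (h : E * (1 + c • vecMulVec v v) = (1 + c • vecMulVec v v) * Eᵀ) :
    (E + Eᵀ) *ᵥ v = (c + 2) • (E *ᵥ v) - (c * (E *ᵥ v ⬝ᵥ v)) • v := by
  have hskew := congrArg (· *ᵥ v) (sub_transpose_eq_of_mul_eq_mul_transpose h)
  simp only [sub_mulVec, smul_mulVec, vecMulVec_mulVec, op_smul_eq_smul, hv, one_smul] at hskew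
  rw [add_mulVec, ← sub_sub_cancel (E *ᵥ v) (Eᵀ *ᵥ v), hskew]
  module

end CommRing

section OrderedRing

variable [CommRing R] [LinearOrder R] [IsStrictOrderedRing R]

theorem trace_mul_transpose_self_nonneg (A : Matrix n m R) : 0 ≤ (A * Aᵀ).trace :=
  Finset.sum_nonneg fun _ _ => Finset.sum_nonneg fun _ _ => mul_self_nonneg _

theorem IsSymm.two_mul_sub_sq_le_trace_mul_transpose {S : Matrix n n R} (hS : S.IsSymm)
    {v : n → R} (hv : v ⬝ᵥ v = 1) :
    2 * ((S *ᵥ v) ⬝ᵥ (S *ᵥ v) - (v ⬝ᵥ S *ᵥ v) ^ 2) ≤ (S * Sᵀ).trace := by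
  set a := v ⬝ᵥ S *ᵥ v
  set w := S *ᵥ v - a • v
  have hSv : S *ᵥ v = w + a • v := (sub_add_cancel _ _).symm
  have hwv : w ⬝ᵥ v = 0 := by
    simp only [w, sub_dotProduct, smul_dotProduct, hv, smul_eq_mul, mul_one, a,
      dotProduct_comm v, sub_self]
  have hww : w ⬝ᵥ w = (S *ᵥ v) ⬝ᵥ (S *ᵥ v) - a ^ 2 := by
    rw [hSv]
    simp only [add_dotProduct, dotProduct_add, smul_dotProduct, dotProduct_smul, hwv, hv,
      dotProduct_comm v w, smul_eq_mul]
    ring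
  have hSX : (S * (vecMulVec v w + vecMulVec w v)ᵀ).trace = 2 * (w ⬝ᵥ w) := by
    rw [transpose_add, transpose_vecMulVec, transpose_vecMulVec, Matrix.mul_add, mul_vecMulVec,
      mul_vecMulVec, trace_add, trace_vecMulVec, trace_vecMulVec, dotProduct_comm _ v,
      dotProduct_mulVec, ← mulVec_transpose, hS.eq, hSv]
    simp only [add_dotProduct, smul_dotProduct, hwv, dotProduct_comm v w]
    ring
  -- `v wᵀ + w vᵀ` is the off-diagonal part of `S` in the row and the column of `v`.
  have hsq := trace_mul_transpose_self_nonneg (S - (vecMulVec v w + vecMulVec w v))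
  rw [trace_sub_mul_transpose_sub, hSX, trace_vecMulVec_add_mul_transpose, hv, hwv] at hsq
  linarith

theorem sq_add_two_mul_trace_sub_transpose_le_of_mul_eq_mul_transpose [DecidableEq n] {c : R}
    {v : n → R} (hv : v ⬝ᵥ v = 1) {E : Matrix n n R}
    (h : E * (1 + c • vecMulVec v v) = (1 + c • vecMulVec v v) * Eᵀ) :
    (c + 2) ^ 2 * ((E - Eᵀ) * (E - Eᵀ)ᵀ).trace ≤ c ^ 2 * ((E + Eᵀ) * (E + Eᵀ)ᵀ).trace := by
  set u := E *ᵥ v with hu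
  have hskew : ((E - Eᵀ) * (E - Eᵀ)ᵀ).trace = c ^ 2 * (2 * (u ⬝ᵥ u - (u ⬝ᵥ v) ^ 2)) := by
    rw [sub_transpose_eq_of_mul_eq_mul_transpose h, trace_smul_mul_transpose_smul,
      trace_vecMulVec_sub_mul_transpose, hv, mul_one]
  have hsym : (c + 2) ^ 2 * (2 * (u ⬝ᵥ u - (u ⬝ᵥ v) ^ 2)) ≤ ((E + Eᵀ) * (E + Eᵀ)ᵀ).trace := by
    have h₀ := (isSymm_add_transpose_self E).two_mul_sub_sq_le_trace_mul_transpose hv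
    rw [add_transpose_mulVec_of_mul_eq_mul_transpose hv h, ← hu] at h₀
    convert h₀ using 1
    simp only [sub_dotProduct, dotProduct_sub, smul_dotProduct, dotProduct_smul, hv,
      dotProduct_comm v u, smul_eq_mul]
    ring
  calc (c + 2) ^ 2 * ((E - Eᵀ) * (E - Eᵀ)ᵀ).trace
      = c ^ 2 * ((c + 2) ^ 2 * (2 * (u ⬝ᵥ u - (u ⬝ᵥ v) ^ 2))) := by rw [hskew]; ring
    _ ≤ c ^ 2 * ((E + Eᵀ) * (E + Eᵀ)ᵀ).trace := mul_le_mul_of_nonneg_left hsym (sq_nonneg c)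

end OrderedRing

end Matrix

theorem trace_sq_ge_of_selfdual_general (n : ℕ) (p : ℝ)
    (v : Fin n → ℝ) (hv : v ⬝ᵥ v = 1)
    (E : Matrix (Fin n) (Fin n) ℝ)
    (hEA : E * ((1 : Matrix (Fin n) (Fin n) ℝ) + (p - 2) • vecMulVec v v)
        = ((1 : Matrix (Fin n) (Fin n) ℝ) + (p - 2) • vecMulVec v v) * Eᵀ) :
    (E * E).trace ≥ (2 * (p - 1) / (1 + (p - 1) ^ 2)) * (E * Eᵀ).trace := by
  have hkey := sq_add_two_mul_trace_sub_transpose_le_of_mul_eq_mul_transpose hv hEA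
  rw [trace_sub_mul_transpose_sub, trace_add_mul_transpose_add, transpose_transpose,
    trace_mul_comm Eᵀ E] at hkey
  rw [ge_iff_le, div_mul_eq_mul_div, div_le_iff₀ (by positivity)]
  linarith

/-- If `E * A = A * Eᵀ` for `A = I + (p-2) v vᵀ` with `v` a unit vector and
`p > 1`, then `trace (E²) ≥ (2(p-1)/(1+(p-1)²)) ‖E‖²` with `‖E‖² = trace (E Eᵀ)`. -/
theorem trace_sq_ge_of_selfdual (n : ℕ) (p : ℝ) (hp : 1 < p)
    (v : Fin n → ℝ) (hv : v ⬝ᵥ v = 1)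
    (E : Matrix (Fin n) (Fin n) ℝ)
    (hEA : E * ((1 : Matrix (Fin n) (Fin n) ℝ) + (p - 2) • vecMulVec v v)
        = ((1 : Matrix (Fin n) (Fin n) ℝ) + (p - 2) • vecMulVec v v) * Eᵀ) :
    (E * E).trace ≥ (2 * (p - 1) / (1 + (p - 1) ^ 2)) * (E * Eᵀ).trace :=
  trace_sq_ge_of_selfdual_general n p v hv E hEA
end

section
/- Let n ≥ 2, p > 1, v ∈ ℝⁿ a unit vector, A = I + (p-2)vvᵀ, and let E be an n×n real matrix with trace(E) = 0 and EA = AEᵀ. Then the nonlinear Kato inequality holds: trace(E²) ≥ (n(p-1)/(n-1)) · ⟨Ev, A⁻¹(Ev)⟩. -/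
/-!
Let `R = A^{1/2}`, the matrix stretching `v` by `√(p - 1)`. The hypothesis `E A = A Eᵀ` says
exactly that `F = R⁻¹ E R` is symmetric; `F` is trace-free, `tr F² = tr E²` and
`|F v|² = (p - 1) ⟨E v, A⁻¹ E v⟩`. So the claim is the refined Kato inequality
`tr F² ≥ n / (n - 1) |F v|²` for symmetric trace-free `F`. To prove it, let `Q` be the orthogonal
projection onto `v⊥` and `λ = ⟨v, F v⟩`. Cauchy–Schwarz for the trace form, applied to `Q F Q` and
`Q`, gives `λ² = (tr Q F)² ≤ (n - 1) tr (Q F)² = (n - 1) (tr F² - 2 |F v|² + λ²)`, and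
`λ² ≤ |F v|²` finishes the proof when `n ≥ 2`.
-/

open Matrix

namespace Matrix

section CauchySchwarz

theorem trace_mul_transpose_eq_dotProduct {m n R : Type*} [Fintype m] [Fintype n]
    [NonUnitalNonAssocSemiring R] (M N : Matrix m n R) :
    (M * Nᵀ).trace = Function.uncurry M ⬝ᵥ Function.uncurry N := by
  simp only [trace, diag_apply, mul_apply, transpose_apply, dotProduct, Fintype.sum_prod_type]
  rfl

variable {ι m n R : Type*} [Fintype ι] [Fintype m] [Fintype n]
  [CommRing R] [LinearOrder R] [IsStrictOrderedRing R]

theorem dotProduct_sq_le (u w : ι → R) : (u ⬝ᵥ w) ^ 2 ≤ (u ⬝ᵥ u) * (w ⬝ᵥ w) :=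
  Finset.sum_sq_le_sum_mul_sum_of_sq_le_mul _ (fun i _ => mul_self_nonneg (u i))
    (fun i _ => mul_self_nonneg (w i)) (fun _ _ => le_of_eq (by ring))

theorem trace_mul_transpose_sq_le (M N : Matrix m n R) :
    (M * Nᵀ).trace ^ 2 ≤ (M * Mᵀ).trace * (N * Nᵀ).trace := by
  simpa only [trace_mul_transpose_eq_dotProduct] using
    dotProduct_sq_le (Function.uncurry M) (Function.uncurry N)

theorem IsSymm.trace_mul_sq_le {F Q : Matrix n n R} (hF : F.IsSymm) (hQ : Q.IsSymm)
    (hQQ : IsIdempotentElem Q) : (Q * F).trace ^ 2 ≤ Q.trace * (Q * F * Q * F).trace := by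
  have hQQ' : ∀ X, Q * (Q * X) = Q * X := fun X => by rw [← Matrix.mul_assoc, hQQ.eq]
  have hcs := trace_mul_transpose_sq_le (Q * F * Q) Q
  have hX : (Q * F * Q * Qᵀ).trace = (Q * F).trace := by
    rw [hQ.eq, Matrix.mul_assoc, hQQ.eq, trace_mul_cycle, hQQ.eq]
  have hXX : (Q * F * Q * (Q * F * Q)ᵀ).trace = (Q * F * Q * F).trace :=
    calc (Q * F * Q * (Q * F * Q)ᵀ).trace = (Q * F * Q * F * Q).trace := by
          simp only [transpose_mul, hQ.eq, hF.eq, Matrix.mul_assoc, hQQ']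
      _ = (Q * F * Q * F).trace := by
          rw [trace_mul_comm]; simp only [← Matrix.mul_assoc, hQQ.eq]
  have hQ2 : (Q * Qᵀ).trace = Q.trace := by rw [hQ.eq, hQQ.eq]
  rw [hX, hXX, hQ2] at hcs
  linarith

end CauchySchwarz

theorem isSymm_nonsing_inv_mul_mul {n α : Type*} [Fintype n] [DecidableEq n] [CommRing α]
    {R E : Matrix n n α} (hR : R.IsSymm) (hdet : IsUnit R.det)
    (hE : E * (R * R) = R * R * Eᵀ) : (R⁻¹ * E * R).IsSymm := by
  change (R⁻¹ * E * R)ᵀ = _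
  rw [transpose_mul, transpose_mul, transpose_nonsing_inv, hR.eq]
  calc R * (Eᵀ * R⁻¹) = R⁻¹ * (R * R * Eᵀ) * R⁻¹ := by
        simp only [Matrix.mul_assoc, nonsing_inv_mul_cancel_left _ _ hdet]
    _ = R⁻¹ * (E * (R * R)) * R⁻¹ := by rw [hE]
    _ = R⁻¹ * E * R := by
        simp only [← Matrix.mul_assoc, mul_nonsing_inv_cancel_right _ _ hdet]

theorem IsSymm.nonsing_inv_mulVec_dotProduct_self {n α : Type*} [Fintype n] [DecidableEq n]
    [CommRing α] {R : Matrix n n α} (hR : R.IsSymm) (x : n → α) :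
    R⁻¹ *ᵥ x ⬝ᵥ R⁻¹ *ᵥ x = x ⬝ᵥ (R * R)⁻¹ *ᵥ x := by
  rw [mul_inv_rev, ← mulVec_mulVec, dotProduct_mulVec, ← mulVec_transpose,
    transpose_nonsing_inv, hR.eq, dotProduct_comm]

section Stretch

variable {ι : Type*} [DecidableEq ι] {v : ι → ℝ}

/-- For a unit vector `v`, the symmetric map multiplying `v` by `t` and fixing `v⊥`. -/
def stretchAlong (v : ι → ℝ) (t : ℝ) : Matrix ι ι ℝ := 1 + (t - 1) • vecMulVec v v

theorem isSymm_stretchAlong (v : ι → ℝ) (t : ℝ) : (stretchAlong v t).IsSymm :=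
  isSymm_one.add (IsSymm.smul (transpose_vecMulVec v v) _)

variable [Fintype ι]

theorem stretchAlong_mul (v : ι → ℝ) (t : ℝ) (M : Matrix ι ι ℝ) :
    stretchAlong v t * M = M + (t - 1) • vecMulVec v (v ᵥ* M) := by
  rw [stretchAlong, add_mul, one_mul, smul_mul_assoc, vecMulVec_mul]

theorem trace_stretchAlong (hv : v ⬝ᵥ v = 1) (t : ℝ) :
    (stretchAlong v t).trace = Fintype.card ι + (t - 1) := by
  simp [stretchAlong, hv]

theorem stretchAlong_mulVec_self (hv : v ⬝ᵥ v = 1) (t : ℝ) : stretchAlong v t *ᵥ v = t • v := by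
  rw [stretchAlong, add_mulVec, one_mulVec, smul_mulVec, vecMulVec_mulVec, hv,
    MulOpposite.op_one, one_smul, sub_smul, one_smul, add_sub_cancel]

theorem stretchAlong_mul_stretchAlong (hv : v ⬝ᵥ v = 1) (s t : ℝ) :
    stretchAlong v s * stretchAlong v t = stretchAlong v (s * t) := by
  rw [stretchAlong_mul, ← mulVec_transpose, (isSymm_stretchAlong v t).eq,
    stretchAlong_mulVec_self hv, stretchAlong, stretchAlong, vecMulVec_smul]
  module

theorem isUnit_det_stretchAlong (hv : v ⬝ᵥ v = 1) {t : ℝ} (ht : t ≠ 0) :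
    IsUnit (stretchAlong v t).det :=
  isUnit_det_of_right_inverse (B := stretchAlong v t⁻¹) <| by
    rw [stretchAlong_mul_stretchAlong hv, mul_inv_cancel₀ ht, stretchAlong, sub_self, zero_smul,
      add_zero]

end Stretch

theorem IsSymm.kato_inequality {ι : Type*} [Fintype ι] [DecidableEq ι] {F : Matrix ι ι ℝ}
    (hF : F.IsSymm) (htr : F.trace = 0) {v : ι → ℝ} (hv : v ⬝ᵥ v = 1)
    (hcard : 2 ≤ Fintype.card ι) :
    (Fintype.card ι : ℝ) / (Fintype.card ι - 1) * (F *ᵥ v ⬝ᵥ F *ᵥ v) ≤ (F * F).trace := by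
  set u := F *ᵥ v
  set G := vecMulVec v u
  have hQF : stretchAlong v 0 * F = F - G := by
    rw [stretchAlong_mul, ← mulVec_transpose, hF.eq]
    module
  have htrGF : (G * F).trace = u ⬝ᵥ u := by
    rw [vecMulVec_mul, trace_vecMulVec, ← mulVec_transpose, hF.eq, dotProduct_mulVec,
      ← mulVec_transpose, hF.eq]
  have htrGG : (G * G).trace = (v ⬝ᵥ u) ^ 2 := by
    rw [vecMulVec_mul_vecMulVec, trace_vecMulVec, dotProduct_smul, smul_eq_mul,
      dotProduct_comm u v, sq]
  have hcompress := hF.trace_mul_sq_le (isSymm_stretchAlong v 0)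
    (by rw [IsIdempotentElem, stretchAlong_mul_stretchAlong hv, mul_zero])
  rw [trace_stretchAlong hv, Matrix.mul_assoc (stretchAlong v 0 * F), hQF] at hcompress
  simp only [sub_mul, mul_sub, trace_sub, htr, htrGF, htrGG, trace_mul_comm F G, G,
    trace_vecMulVec] at hcompress
  have hcs := dotProduct_sq_le v u
  have hn : (2 : ℝ) ≤ Fintype.card ι := by exact_mod_cast hcard
  rw [hv, one_mul] at hcs
  rw [div_mul_eq_mul_div, div_le_iff₀ (by linarith)]
  linarith [mul_nonneg (sub_nonneg.2 hn) (sub_nonneg.2 hcs)]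

end Matrix

/-- nonlinear Kato inequality:
`trace (E²) ≥ (n(p-1)/(n-1)) ⟨Ev, A⁻¹ (Ev)⟩` for trace-free `E` with `E A = A Eᵀ`,
where `A = I + (p-2) v vᵀ`, `v` a unit vector, `p > 1`, `n ≥ 2`. -/
theorem nonlinear_kato (n : ℕ) (hn : 2 ≤ n) (p : ℝ) (hp : 1 < p)
    (v : Fin n → ℝ) (hv : v ⬝ᵥ v = 1)
    (E : Matrix (Fin n) (Fin n) ℝ) (htr : E.trace = 0)
    (hEA : E * ((1 : Matrix (Fin n) (Fin n) ℝ) + (p - 2) • vecMulVec v v)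
        = ((1 : Matrix (Fin n) (Fin n) ℝ) + (p - 2) • vecMulVec v v) * Eᵀ) :
    (E * E).trace ≥ ((n : ℝ) * (p - 1) / ((n : ℝ) - 1)) *
      (E.mulVec v ⬝ᵥ
        (((1 : Matrix (Fin n) (Fin n) ℝ) + (p - 2) • vecMulVec v v)⁻¹).mulVec (E.mulVec v)) := by
  have hp1 : 0 < p - 1 := by linarith
  set s := √(p - 1)
  have hs : s ≠ 0 := (Real.sqrt_pos.2 hp1).ne'
  set R := stretchAlong v s
  have hRR : R * R = 1 + (p - 2) • vecMulVec v v := by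
    rw [stretchAlong_mul_stretchAlong hv, Real.mul_self_sqrt hp1.le, stretchAlong]
    congr 2
    ring
  have hdet : IsUnit R.det := isUnit_det_stretchAlong hv hs
  rw [← hRR] at hEA ⊢
  set F := R⁻¹ * E * R
  have hF : F.IsSymm := isSymm_nonsing_inv_mul_mul (isSymm_stretchAlong v s) hdet hEA
  have hFtr : F.trace = 0 := by rw [trace_conj' ((isUnit_iff_isUnit_det R).2 hdet), htr]
  have hFF : (F * F).trace = (E * E).trace := by
    rw [show F * F = R⁻¹ * (E * E) * R by
        simp only [F, Matrix.mul_assoc, mul_nonsing_inv_cancel_left _ _ hdet],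
      trace_conj' ((isUnit_iff_isUnit_det R).2 hdet)]
  have hFv : F *ᵥ v ⬝ᵥ F *ᵥ v = (p - 1) * (E *ᵥ v ⬝ᵥ (R * R)⁻¹ *ᵥ E *ᵥ v) := by
    rw [← mulVec_mulVec, ← mulVec_mulVec, stretchAlong_mulVec_self hv, mulVec_smul, mulVec_smul,
      dotProduct_smul, smul_dotProduct, (isSymm_stretchAlong v s).nonsing_inv_mulVec_dotProduct_self,
      smul_eq_mul, smul_eq_mul, ← mul_assoc, Real.mul_self_sqrt hp1.le]
  have hkato := hF.kato_inequality hFtr hv (by simpa using hn)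
  rw [hFF, hFv, Fintype.card_fin] at hkato
  rw [ge_iff_le]
  convert hkato using 1
  ring
end

section
/- Let n ≥ 2, p > 1, v ∈ ℝⁿ a unit vector, A = I + (p-2)vvᵀ, and let E be an n×n real matrix with trace(E) = 0 and EA = AEᵀ. Then |Ev|² ≤ max{(n-1)/n, 1/(2(p-1))} · trace(E²). -/
/-!
Put `q = √(p - 1)`. Then `R = I + (q - 1) vvᵀ` is a symmetric square root of `A` with `Rv = qv`,
and `EA = AEᵀ` says exactly that `M = R⁻¹ E R` is symmetric. `M` is trace-free with
`tr M² = tr E²`, and `|Ev|² = (|Mv|² + (p - 2) s²) / (p - 1)` where `s = v ⬝ Mv`.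
The compression `N = QMQ` of `M` to `v^⊥` (`Q = I - vvᵀ`) has `tr N = -s` and
`tr N² = tr M² - 2|Mv|² + s²`; Cauchy–Schwarz for the trace form, applied to `Q` and `N`,
gives `s² ≤ (n - 1) tr N²`, since `N` lives on the `(n - 1)`-dimensional range of `Q`.
Together with `s² ≤ |Mv|²` this leaves an inequality between real numbers.
-/

open Matrix

section TraceForm

variable {ι : Type*} [Fintype ι]

lemma trace_transpose_mul_eq_sum (A B : Matrix ι ι ℝ) :
    (Aᵀ * B).trace = ∑ x : ι × ι, A x.1 x.2 * B x.1 x.2 := by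
  rw [Fintype.sum_prod_type, Finset.sum_comm]
  simp [trace, mul_apply]

lemma trace_transpose_mul_self_nonneg (A : Matrix ι ι ℝ) : 0 ≤ (Aᵀ * A).trace := by
  rw [trace_transpose_mul_eq_sum]
  exact Finset.sum_nonneg fun _ _ => mul_self_nonneg _

lemma sq_trace_transpose_mul_le (A B : Matrix ι ι ℝ) :
    (Aᵀ * B).trace ^ 2 ≤ (Aᵀ * A).trace * (Bᵀ * B).trace := by
  simp only [trace_transpose_mul_eq_sum, ← sq]
  exact Finset.sum_mul_sq_le_sq_mul_sq _ _ _

lemma sq_trace_le_trace_mul_trace_mul_self {Q N : Matrix ι ι ℝ} (hQ : Q.IsSymm) (hQQ : Q * Q = Q)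
    (hN : N.IsSymm) (hQN : Q * N = N) : N.trace ^ 2 ≤ Q.trace * (N * N).trace := by
  simpa only [hQ.eq, hQQ, hN.eq, hQN] using sq_trace_transpose_mul_le Q N

end TraceForm

lemma vecMulVec_mul_self {ι : Type*} [Fintype ι] {v : ι → ℝ} (hv : v ⬝ᵥ v = 1) :
    vecMulVec v v * vecMulVec v v = vecMulVec v v := by
  rw [vecMulVec_mul_vecMulVec, hv, one_smul]

section Compression

variable {ι : Type*} [DecidableEq ι] {v : ι → ℝ}

def orthProj (v : ι → ℝ) : Matrix ι ι ℝ := 1 - vecMulVec v v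

lemma isSymm_orthProj (v : ι → ℝ) : (orthProj v).IsSymm := by
  simp [orthProj, IsSymm, transpose_vecMulVec]

variable [Fintype ι]

lemma orthProj_mul_self (hv : v ⬝ᵥ v = 1) : orthProj v * orthProj v = orthProj v := by
  simp only [orthProj, sub_mul, mul_sub, one_mul, mul_one, vecMulVec_mul_self hv]
  abel

lemma trace_orthProj (hv : v ⬝ᵥ v = 1) : (orthProj v).trace = Fintype.card ι - 1 := by
  simp [orthProj, hv]

lemma orthProj_mul (M : Matrix ι ι ℝ) : orthProj v * M = M - vecMulVec v (v ᵥ* M) := by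
  rw [orthProj, sub_mul, one_mul, vecMulVec_mul]

lemma trace_orthProj_conj (hv : v ⬝ᵥ v = 1) (M : Matrix ι ι ℝ) :
    (orthProj v * M * orthProj v).trace = M.trace - v ⬝ᵥ M *ᵥ v := by
  rw [trace_mul_cycle, orthProj_mul_self hv, orthProj_mul, trace_sub,
    trace_vecMulVec, dotProduct_comm, ← dotProduct_mulVec]

lemma trace_orthProj_conj_sq {M : Matrix ι ι ℝ} (hM : M.IsSymm) (hv : v ⬝ᵥ v = 1) :
    ((orthProj v * M * orthProj v) * (orthProj v * M * orthProj v)).trace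
      = (M * M).trace - 2 * (M *ᵥ v ⬝ᵥ M *ᵥ v) + (v ⬝ᵥ M *ᵥ v) ^ 2 := by
  have hQQ : ∀ X : Matrix ι ι ℝ, orthProj v * (orthProj v * X) = orthProj v * X := fun X => by
    rw [← mul_assoc, orthProj_mul_self hv]
  have hcyc : ((orthProj v * M * orthProj v) * (orthProj v * M * orthProj v)).trace
      = ((orthProj v * M) * (orthProj v * M)).trace := by
    calc _ = ((orthProj v * M) * (orthProj v * M) * orthProj v).trace := by
          simp only [mul_assoc, hQQ]
      _ = (orthProj v * ((orthProj v * M) * (orthProj v * M))).trace := trace_mul_comm _ _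
      _ = _ := by simp only [mul_assoc, hQQ]
  have hvM : v ᵥ* M = M *ᵥ v := by rw [← mulVec_transpose, hM.eq]
  rw [hcyc, orthProj_mul, hvM]
  simp only [sub_mul, mul_sub, trace_sub, mul_vecMulVec, vecMulVec_mul, trace_vecMulVec,
    vecMulVec_mulVec, op_smul_eq_smul, smul_dotProduct, smul_eq_mul]
  rw [dotProduct_comm v, ← dotProduct_mulVec, dotProduct_comm (M *ᵥ v) v]
  ring

lemma isSymm_orthProj_conj {M : Matrix ι ι ℝ} (hM : M.IsSymm) :
    (orthProj v * M * orthProj v).IsSymm := by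
  simp only [IsSymm, transpose_mul, (isSymm_orthProj v).eq, hM.eq, mul_assoc]

lemma sq_dotProduct_mulVec_le {M : Matrix ι ι ℝ} (hM : M.IsSymm) (htr : M.trace = 0)
    (hv : v ⬝ᵥ v = 1) :
    (v ⬝ᵥ M *ᵥ v) ^ 2 ≤ (Fintype.card ι - 1) *
      ((M * M).trace - 2 * (M *ᵥ v ⬝ᵥ M *ᵥ v) + (v ⬝ᵥ M *ᵥ v) ^ 2) := by
  have hQN : orthProj v * (orthProj v * M * orthProj v) = orthProj v * M * orthProj v := by
    rw [← mul_assoc, ← mul_assoc, orthProj_mul_self hv]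
  have h := sq_trace_le_trace_mul_trace_mul_self (isSymm_orthProj v) (orthProj_mul_self hv)
    (isSymm_orthProj_conj hM) hQN
  rwa [trace_orthProj_conj hv, htr, zero_sub, neg_sq, trace_orthProj hv,
    trace_orthProj_conj_sq hM hv] at h

lemma trace_mul_self_sub_two_mul_add_sq_nonneg {M : Matrix ι ι ℝ} (hM : M.IsSymm)
    (hv : v ⬝ᵥ v = 1) :
    0 ≤ (M * M).trace - 2 * (M *ᵥ v ⬝ᵥ M *ᵥ v) + (v ⬝ᵥ M *ᵥ v) ^ 2 := by
  rw [← trace_orthProj_conj_sq hM hv]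
  simpa only [(isSymm_orthProj_conj hM).eq] using
    trace_transpose_mul_self_nonneg (orthProj v * M * orthProj v)

end Compression

lemma sq_dotProduct_le_dotProduct_self {ι : Type*} [Fintype ι] {v : ι → ℝ} (hv : v ⬝ᵥ v = 1)
    (w : ι → ℝ) : (v ⬝ᵥ w) ^ 2 ≤ w ⬝ᵥ w := by
  calc (v ⬝ᵥ w) ^ 2 ≤ (v ⬝ᵥ v) * (w ⬝ᵥ w) := by
        simpa only [dotProduct, sq] using Finset.sum_mul_sq_le_sq_mul_sq Finset.univ v w
    _ = w ⬝ᵥ w := by rw [hv, one_mul]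

lemma add_mul_sq_div_le_max_mul {n p s W D : ℝ} (hn : 0 < n) (hp : 1 < p) (hsW : s ^ 2 ≤ W)
    (hD : 0 ≤ D) (hsD : s ^ 2 ≤ (n - 1) * D) :
    (W + (p - 2) * s ^ 2) / (p - 1)
      ≤ max ((n - 1) / n) (1 / (2 * (p - 1))) * (2 * W - s ^ 2 + D) := by
  set c := max ((n - 1) / n) (1 / (2 * (p - 1)))
  have hp1 : 0 < p - 1 := by linarith
  have h1 : 1 ≤ 2 * (p - 1) * c := by
    rw [← div_le_iff₀' (by positivity)]; exact le_max_right _ _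
  have h2 : s ^ 2 ≤ c * (s ^ 2 + D) := by
    have : s ^ 2 ≤ (n - 1) / n * (s ^ 2 + D) := by
      rw [div_mul_eq_mul_div, le_div_iff₀ hn]; linarith
    exact this.trans (mul_le_mul_of_nonneg_right (le_max_left _ _) (by positivity))
  -- `(p - 1) · LHS = (W - s²) + (p - 1) s²`, and `h1`, `h2` bound the two summands.
  rw [div_le_iff₀ hp1]
  nlinarith [mul_le_mul_of_nonneg_right h1 (sub_nonneg.2 hsW), mul_le_mul_of_nonneg_left h2 hp1.le]

lemma add_mul_sq_div_le_max_mul_trace_mul_self {ι : Type*} [Fintype ι] [DecidableEq ι]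
    {v : ι → ℝ} (hv : v ⬝ᵥ v = 1) {M : Matrix ι ι ℝ} (hM : M.IsSymm) (htr : M.trace = 0)
    {p : ℝ} (hp : 1 < p) :
    (M *ᵥ v ⬝ᵥ M *ᵥ v + (p - 2) * (v ⬝ᵥ M *ᵥ v) ^ 2) / (p - 1)
      ≤ max (((Fintype.card ι : ℝ) - 1) / Fintype.card ι) (1 / (2 * (p - 1))) * (M * M).trace := by
  have hι : Nonempty ι := by
    by_contra h
    rw [not_nonempty_iff] at h
    simp [dotProduct] at hv
  have h := add_mul_sq_div_le_max_mul (by exact_mod_cast Fintype.card_pos) hp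
    (sq_dotProduct_le_dotProduct_self hv _) (trace_mul_self_sub_two_mul_add_sq_nonneg hM hv)
    (sq_dotProduct_mulVec_le hM htr hv)
  refine h.trans_eq ?_
  ring

section RankOne

variable {ι : Type*} [DecidableEq ι] {v : ι → ℝ}

lemma isSymm_one_add_smul_vecMulVec (v : ι → ℝ) (a : ℝ) :
    (1 + a • vecMulVec v v).IsSymm := by
  simp [IsSymm, transpose_vecMulVec]

variable [Fintype ι]

lemma one_add_smul_vecMulVec_mul (hv : v ⬝ᵥ v = 1) (a b : ℝ) :
    (1 + a • vecMulVec v v) * (1 + b • vecMulVec v v) = 1 + (a + b + a * b) • vecMulVec v v := by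
  simp only [mul_add, add_mul, one_mul, mul_one, smul_mul_smul, vecMulVec_mul_self hv, add_smul]
  abel

lemma one_add_smul_vecMulVec_mulVec (hv : v ⬝ᵥ v = 1) (a : ℝ) :
    (1 + a • vecMulVec v v) *ᵥ v = (1 + a) • v := by
  rw [add_mulVec, one_mulVec, smul_mulVec, vecMulVec_mulVec, hv, MulOpposite.op_one, one_smul,
    add_smul, one_smul]

lemma dotProduct_one_add_smul_vecMulVec_mulVec (a : ℝ) (w : ι → ℝ) :
    w ⬝ᵥ (1 + a • vecMulVec v v) *ᵥ w = w ⬝ᵥ w + a * (v ⬝ᵥ w) ^ 2 := by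
  rw [add_mulVec, one_mulVec, smul_mulVec, vecMulVec_mulVec, op_smul_eq_smul, dotProduct_add,
    dotProduct_smul, dotProduct_smul, dotProduct_comm w v, smul_eq_mul, smul_eq_mul]
  ring

lemma exists_isSymm_mul_self_eq_one_add_smul_vecMulVec (hv : v ⬝ᵥ v = 1) {a : ℝ} (ha : -1 < a) :
    ∃ R : Matrix ι ι ℝ, R.IsSymm ∧ IsUnit R.det ∧ R * R = 1 + a • vecMulVec v v ∧
      R *ᵥ v = √(1 + a) • v := by
  have hq : √(1 + a) ≠ 0 := (Real.sqrt_pos.2 (by linarith)).ne'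
  have hq2 : √(1 + a) ^ 2 = 1 + a := Real.sq_sqrt (by linarith)
  refine ⟨1 + (√(1 + a) - 1) • vecMulVec v v, isSymm_one_add_smul_vecMulVec v _,
    isUnit_det_of_right_inverse (B := 1 + ((√(1 + a))⁻¹ - 1) • vecMulVec v v) ?_, ?_, ?_⟩
  · rw [one_add_smul_vecMulVec_mul hv]
    have h0 : √(1 + a) - 1 + ((√(1 + a))⁻¹ - 1) + (√(1 + a) - 1) * ((√(1 + a))⁻¹ - 1) = 0 := by
      field_simp
      ring
    rw [h0, zero_smul, add_zero]
  · rw [one_add_smul_vecMulVec_mul hv]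
    congr 2
    linear_combination hq2
  · rw [one_add_smul_vecMulVec_mulVec hv, add_sub_cancel]

end RankOne

section Conjugation

variable {ι : Type*} [Fintype ι] [DecidableEq ι] {R : Matrix ι ι ℝ}

lemma isSymm_inv_mul_mul_of_mul_mul_self (hR : R.IsSymm) (hdet : IsUnit R.det)
    {E : Matrix ι ι ℝ} (hE : E * (R * R) = R * R * Eᵀ) : (R⁻¹ * E * R).IsSymm := by
  have hEt : (R⁻¹ * E * R)ᵀ = R * Eᵀ * R⁻¹ := by
    rw [transpose_mul, transpose_mul, transpose_nonsing_inv, hR.eq, mul_assoc]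
  rw [IsSymm, hEt]
  calc R * Eᵀ * R⁻¹ = R⁻¹ * (R * R * Eᵀ) * R⁻¹ := by
        simp only [← mul_assoc, nonsing_inv_mul _ hdet, one_mul]
    _ = R⁻¹ * (E * (R * R)) * R⁻¹ := by rw [hE]
    _ = R⁻¹ * E * R := by simp only [mul_assoc, mul_nonsing_inv _ hdet, mul_one]

lemma trace_inv_mul_mul_mul_self (hdet : IsUnit R.det) (E : Matrix ι ι ℝ) :
    ((R⁻¹ * E * R) * (R⁻¹ * E * R)).trace = (E * E).trace := by
  have h : (R⁻¹ * E * R) * (R⁻¹ * E * R) = R⁻¹ * (E * E) * R := by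
    simp only [mul_assoc, mul_nonsing_inv_cancel_left _ _ hdet]
  rw [h, trace_conj' ((isUnit_iff_isUnit_det R).2 hdet)]

lemma mul_mul_inv_mulVec_dotProduct (hR : R.IsSymm) (hdet : IsUnit R.det) {v : ι → ℝ} {q : ℝ}
    (hq : q ≠ 0) (hRv : R *ᵥ v = q • v) (M : Matrix ι ι ℝ) :
    (R * M * R⁻¹) *ᵥ v ⬝ᵥ (R * M * R⁻¹) *ᵥ v = (M *ᵥ v ⬝ᵥ (R * R) *ᵥ (M *ᵥ v)) / q ^ 2 := by
  have hRinv : R⁻¹ *ᵥ v = q⁻¹ • v := by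
    rw [← inv_smul_smul₀ hq (R⁻¹ *ᵥ v), ← mulVec_smul, ← hRv, mulVec_mulVec,
      nonsing_inv_mul _ hdet, one_mulVec]
  rw [← mulVec_mulVec, ← mulVec_mulVec, hRinv, mulVec_smul, mulVec_smul, smul_dotProduct,
    dotProduct_smul, dotProduct_mulVec, ← mulVec_transpose, hR.eq, dotProduct_comm,
    ← mulVec_mulVec, smul_eq_mul, smul_eq_mul]
  field_simp

end Conjugation

theorem Ev_sq_le_general (n : ℕ) (p : ℝ) (hp : 1 < p)
    (v : Fin n → ℝ) (hv : v ⬝ᵥ v = 1)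
    (E : Matrix (Fin n) (Fin n) ℝ) (htr : E.trace = 0)
    (hEA : E * ((1 : Matrix (Fin n) (Fin n) ℝ) + (p - 2) • vecMulVec v v)
        = ((1 : Matrix (Fin n) (Fin n) ℝ) + (p - 2) • vecMulVec v v) * Eᵀ) :
    E.mulVec v ⬝ᵥ E.mulVec v
      ≤ max (((n : ℝ) - 1) / n) (1 / (2 * (p - 1))) * (E * E).trace := by
  obtain ⟨R, hR, hdet, hRR, hRv⟩ :=
    exists_isSymm_mul_self_eq_one_add_smul_vecMulVec hv (a := p - 2) (by linarith)
  have hq : √(1 + (p - 2)) ^ 2 = p - 1 := by rw [Real.sq_sqrt (by linarith)]; ring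
  set M := R⁻¹ * E * R
  have hE : E = R * M * R⁻¹ := by
    simp only [M, mul_assoc, mul_nonsing_inv_cancel_left _ _ hdet, mul_nonsing_inv _ hdet, mul_one]
  have hM : M.IsSymm := isSymm_inv_mul_mul_of_mul_mul_self hR hdet (hRR ▸ hEA)
  have hMtr : M.trace = 0 := by rw [trace_conj' ((isUnit_iff_isUnit_det R).2 hdet), htr]
  have hEv : E *ᵥ v ⬝ᵥ E *ᵥ v = (M *ᵥ v ⬝ᵥ M *ᵥ v + (p - 2) * (v ⬝ᵥ M *ᵥ v) ^ 2) / (p - 1) := by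
    rw [hE, mul_mul_inv_mulVec_dotProduct hR hdet (Real.sqrt_ne_zero'.2 (by linarith)) hRv, hRR,
      dotProduct_one_add_smul_vecMulVec_mulVec, hq]
  rw [hEv, ← trace_inv_mul_mul_mul_self hdet E]
  simpa only [Fintype.card_fin] using add_mul_sq_div_le_max_mul_trace_mul_self hv hM hMtr hp

/-- `|Ev|² ≤ max {(n-1)/n, 1/(2(p-1))} · trace (E²)` for trace-free `E`
with `E A = A Eᵀ`, `A = I + (p-2) v vᵀ`, `v` a unit vector, `p > 1`, `n ≥ 2`. -/
theorem Ev_sq_le (n : ℕ) (hn : 2 ≤ n) (p : ℝ) (hp : 1 < p)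
    (v : Fin n → ℝ) (hv : v ⬝ᵥ v = 1)
    (E : Matrix (Fin n) (Fin n) ℝ) (htr : E.trace = 0)
    (hEA : E * ((1 : Matrix (Fin n) (Fin n) ℝ) + (p - 2) • vecMulVec v v)
        = ((1 : Matrix (Fin n) (Fin n) ℝ) + (p - 2) • vecMulVec v v) * Eᵀ) :
    E.mulVec v ⬝ᵥ E.mulVec v
      ≤ max (((n : ℝ) - 1) / n) (1 / (2 * (p - 1))) * (E * E).trace :=
  Ev_sq_le_general n p hp v hv E htr hEA
end

section
/- Let 1 < p < n and let u : ℝⁿ → ℝ be a positive C² function. Setting w = ((n−p)/p)^{(p−1)/p} · u^{−p/(n−p)}, if u satisfies −Δ_p u = u^{np/(n−p) − 1} at points where ∇u ≠ 0, then w satisfies Δ_p w = (n(p−1)/p)·w^{−1}|∇w|^p + w^{−1} at those points. -/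
/-!
Write `w = φ ∘ u` with `φ t = c t^(-a)`, `a = p/(n-p)`. For any `φ`, the flux of `φ ∘ u` is
`|∇(φ ∘ u)|^(p-2) ∇(φ ∘ u) = ψ(u) |∇u|^(p-2) ∇u` with `ψ = |φ'|^(p-2) φ'`, so the product rule
for the divergence gives `Δ_p (φ ∘ u) = ψ'(u) |∇u|^p + ψ(u) Δ_p u`. For the power `φ`, `ψ` is again
a power, and the constant `c` is chosen so that `(a c)^(p-1) = c⁻¹`: then `ψ(u) Δ_p u = w⁻¹` by
the equation for `u`, and `ψ'(u) |∇u|^p = (n(p-1)/p) w⁻¹ |∇w|^p`.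
-/

/-- The `p`-Laplacian `Δ_p f = div(|∇f|^{p-2} ∇f)` on `ℝⁿ`, written coordinatewise. -/
noncomputable def pLap (n : ℕ) (p : ℝ) (f : EuclideanSpace ℝ (Fin n) → ℝ)
    (x : EuclideanSpace ℝ (Fin n)) : ℝ :=
  ∑ i, fderiv ℝ (fun y => ‖gradient f y‖ ^ (p - 2) * gradient f y i) x
    (EuclideanSpace.single i 1)

open Real InnerProductSpace

theorem HasDerivAt.hasGradientAt_comp {F : Type*} [NormedAddCommGroup F] [InnerProductSpace ℝ F]
    [CompleteSpace F] {φ : ℝ → ℝ} {φ' : ℝ} {u : F → ℝ} {x : F}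
    (hφ : HasDerivAt φ φ' (u x)) (hu : DifferentiableAt ℝ u x) :
    HasGradientAt (φ ∘ u) (φ' • gradient u x) x := by
  rw [hasGradientAt_iff_hasFDerivAt, map_smul, toDual_gradient]
  exact hφ.comp_hasFDerivAt x hu.hasFDerivAt

theorem norm_smul_rpow_smul {F : Type*} [NormedAddCommGroup F] [NormedSpace ℝ F]
    (r q : ℝ) (v : F) : ‖r • v‖ ^ q • (r • v) = (|r| ^ q * r) • (‖v‖ ^ q • v) := by
  rw [norm_smul, Real.norm_eq_abs, mul_rpow (abs_nonneg r) (norm_nonneg v), smul_smul, smul_smul]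
  congr 1
  ring

theorem contDiff_gradient {F : Type*} [NormedAddCommGroup F] [InnerProductSpace ℝ F]
    [CompleteSpace F] {f : F → ℝ} {k : WithTop ℕ∞} (hf : ContDiff ℝ (k + 1) f) :
    ContDiff ℝ k (gradient f) :=
  (toDual ℝ F).symm.contDiff.comp (hf.fderiv_right le_rfl)

section

variable {n : ℕ}

theorem fderiv_apply_single_eq_gradient {f : EuclideanSpace ℝ (Fin n) → ℝ}
    (x : EuclideanSpace ℝ (Fin n)) (i : Fin n) :
    fderiv ℝ f x (EuclideanSpace.single i 1) = gradient f x i := by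
  rw [← inner_gradient_left, EuclideanSpace.inner_single_right]
  simp

/-- The product rule `div (g V) = ⟪∇g, V⟫ + g div V`, with the divergence in coordinates. -/
theorem sum_fderiv_mul_apply_single {g : EuclideanSpace ℝ (Fin n) → ℝ}
    {V : EuclideanSpace ℝ (Fin n) → EuclideanSpace ℝ (Fin n)} {x : EuclideanSpace ℝ (Fin n)}
    (hg : DifferentiableAt ℝ g x) (hV : ∀ i, DifferentiableAt ℝ (fun y => V y i) x) :
    ∑ i, fderiv ℝ (fun y => g y * V y i) x (EuclideanSpace.single i 1)
      = ⟪gradient g x, V x⟫_ℝ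
        + g x * ∑ i, fderiv ℝ (fun y => V y i) x (EuclideanSpace.single i 1) := by
  simp only [fderiv_fun_mul hg (hV _), add_apply, smul_apply, smul_eq_mul,
    fderiv_apply_single_eq_gradient, Finset.sum_add_distrib, Finset.mul_sum, PiLp.inner_apply,
    RCLike.inner_apply, conj_trivial]
  exact add_comm _ _

theorem pLap_comp {p : ℝ} (hp : p ≠ 0) {u : EuclideanSpace ℝ (Fin n) → ℝ} {φ φ' ψ : ℝ → ℝ}
    {ψ' : ℝ} {x : EuclideanSpace ℝ (Fin n)} (hu : Differentiable ℝ u)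
    (hφ : ∀ y, HasDerivAt φ (φ' (u y)) (u y))
    (hφψ : ∀ y, |φ' (u y)| ^ (p - 2) * φ' (u y) = ψ (u y)) (hψ : HasDerivAt ψ ψ' (u x))
    (hflux : ∀ i, DifferentiableAt ℝ (fun y => ‖gradient u y‖ ^ (p - 2) * gradient u y i) x) :
    pLap n p (φ ∘ u) x = ψ' * ‖gradient u x‖ ^ p + ψ (u x) * pLap n p u x := by
  have hflux_comp : ∀ i y, ‖gradient (φ ∘ u) y‖ ^ (p - 2) * gradient (φ ∘ u) y i
      = ψ (u y) * (‖gradient u y‖ ^ (p - 2) * gradient u y i) := by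
    intro i y
    have := congrArg (· i) (norm_smul_rpow_smul (φ' (u y)) (p - 2) (gradient u y))
    simpa [((hφ y).hasGradientAt_comp (hu y)).gradient, hφψ, mul_assoc] using this
  have hgrad_ψ : gradient (ψ ∘ u) x = ψ' • gradient u x := (hψ.hasGradientAt_comp (hu x)).gradient
  unfold pLap
  simp_rw [hflux_comp]
  have hdiv := sum_fderiv_mul_apply_single (g := ψ ∘ u)
    (V := fun y => ‖gradient u y‖ ^ (p - 2) • gradient u y)
    (hψ.hasGradientAt_comp (hu x)).differentiableAt (by simpa using hflux)
  simp only [PiLp.smul_apply, smul_eq_mul, Function.comp_apply] at hdiv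
  rw [hdiv, hgrad_ψ, real_inner_smul_left, real_inner_smul_right, real_inner_self_eq_norm_sq,
    ← rpow_natCast, ← rpow_add' (norm_nonneg _) (by simpa using hp)]
  norm_num

theorem differentiableAt_pLap_flux {p : ℝ} {u : EuclideanSpace ℝ (Fin n) → ℝ}
    (hu : ContDiff ℝ 2 u) {x : EuclideanSpace ℝ (Fin n)} (hx : gradient u x ≠ 0) (i : Fin n) :
    DifferentiableAt ℝ (fun y => ‖gradient u y‖ ^ (p - 2) * gradient u y i) x := by
  have hgrad : ContDiff ℝ 1 (gradient u) := contDiff_gradient hu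
  have hnorm : DifferentiableAt ℝ (fun y => ‖gradient u y‖) x :=
    (hgrad.contDiffAt.norm ℝ hx).differentiableAt one_ne_zero
  exact (hnorm.rpow_const (Or.inl (norm_ne_zero_iff.mpr hx))).mul
    ((EuclideanSpace.proj (𝕜 := ℝ) i).differentiableAt.comp x
      (hgrad.differentiable one_ne_zero x))

end

theorem abs_rpow_sub_two_mul_deriv_rpow {a c p t : ℝ} (hac : 0 < a * c) (ht : 0 < t) :
    |c * (-a * t ^ (-a - 1))| ^ (p - 2) * (c * (-a * t ^ (-a - 1)))
      = -(a * c) ^ (p - 1) * t ^ ((-a - 1) * (p - 1)) := by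
  have hpos : 0 < a * c * t ^ (-a - 1) := mul_pos hac (rpow_pos_of_pos ht _)
  rw [show c * (-a * t ^ (-a - 1)) = -(a * c * t ^ (-a - 1)) by ring, abs_neg,
    abs_of_pos hpos, mul_neg, ← rpow_add_one hpos.ne', mul_rpow hac.le (rpow_nonneg ht.le _),
    ← rpow_mul ht.le, show p - 2 + 1 = p - 1 by ring, neg_mul]

theorem inv_mul_rpow_rpow_sub_one {b p : ℝ} (hb : 0 < b) (hp : p ≠ 0) :
    (b⁻¹ * b ^ ((p - 1) / p)) ^ (p - 1) = (b ^ ((p - 1) / p))⁻¹ := by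
  rw [← rpow_neg_one, ← rpow_add hb, ← rpow_mul hb.le, ← rpow_neg hb.le]
  congr 1
  field_simp
  ring

theorem critical_exponent_identity {N p a c t G : ℝ} (hp1 : 1 < p) (hpN : p < N)
    (ha : a = p / (N - p)) (hc : c = ((N - p) / p) ^ ((p - 1) / p)) (ht : 0 < t) (hG : 0 ≤ G) :
    -(a * c) ^ (p - 1) * ((-a - 1) * (p - 1) * t ^ ((-a - 1) * (p - 1) - 1)) * G ^ p
        + -(a * c) ^ (p - 1) * t ^ ((-a - 1) * (p - 1)) * -t ^ (N * p / (N - p) - 1)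
      = N * (p - 1) / p * (c * t ^ (-a))⁻¹ * (|c * (-a * t ^ (-a - 1))| * G) ^ p
        + (c * t ^ (-a))⁻¹ := by
  have hp0 : 0 < p := one_pos.trans hp1
  have hNp : 0 < N - p := sub_pos.mpr hpN
  have hc0 : 0 < c := hc ▸ rpow_pos_of_pos (div_pos hNp hp0) _
  have hac : 0 < a * c := mul_pos (ha ▸ div_pos hp0 hNp) hc0
  have hK : (a * c) ^ (p - 1) = c⁻¹ := by
    rw [ha, hc, ← inv_div]; exact inv_mul_rpow_rpow_sub_one (div_pos hNp hp0) hp0.ne'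
  have hKp : (a * c) ^ p = a := by
    rw [← sub_add_cancel p 1, rpow_add_one hac.ne', hK]
    field_simp
  have habs : |c * (-a * t ^ (-a - 1))| = a * c * t ^ (-a - 1) := by
    rw [show c * (-a * t ^ (-a - 1)) = -(a * c * t ^ (-a - 1)) by ring, abs_neg,
      abs_of_pos (mul_pos hac (rpow_pos_of_pos ht _))]
  have e1 : t ^ ((-a - 1) * (p - 1)) * t ^ (N * p / (N - p) - 1) = t ^ a := by
    rw [← rpow_add ht, ha]; congr 1; field_simp; ring
  have e2 : t ^ ((-a - 1) * (p - 1) - 1) = t ^ a * t ^ ((-a - 1) * p) := by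
    rw [← rpow_add ht]; congr 1; ring
  have e3 : -((-a - 1) * (p - 1)) = N * (p - 1) / p * a := by
    rw [ha]; field_simp; ring
  rw [habs, mul_rpow (by positivity) hG, mul_rpow hac.le (rpow_nonneg ht.le _), hKp,
    ← rpow_mul ht.le, hK, mul_inv, ← rpow_neg ht.le, neg_neg, e2]
  linear_combination c⁻¹ * e1 + c⁻¹ * t ^ a * t ^ ((-a - 1) * p) * G ^ p * e3

/-- if `u > 0` is C² and `-Δ_p u = u^{np/(n-p)-1}` at points where `∇u ≠ 0`,
then `w = ((n-p)/p)^{(p-1)/p} u^{-p/(n-p)}` satisfies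
`Δ_p w = (n(p-1)/p) w⁻¹ |∇w|^p + w⁻¹` at those points. -/
theorem change_of_variables_critical (n : ℕ) (p : ℝ) (hp1 : 1 < p) (hpn : p < n)
    (u : EuclideanSpace ℝ (Fin n) → ℝ) (hu : ContDiff ℝ 2 u) (hpos : ∀ x, 0 < u x)
    (heq : ∀ x, gradient u x ≠ 0 →
      -pLap n p u x = u x ^ ((n : ℝ) * p / ((n : ℝ) - p) - 1)) :
    let w : EuclideanSpace ℝ (Fin n) → ℝ :=
      fun y => (((n : ℝ) - p) / p) ^ ((p - 1) / p) * u y ^ (-(p / ((n : ℝ) - p)))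
    ∀ x, gradient u x ≠ 0 →
      pLap n p w x = ((n : ℝ) * (p - 1) / p) * (w x)⁻¹ * ‖gradient w x‖ ^ p + (w x)⁻¹ := by
  intro w x hx
  set a := p / ((n : ℝ) - p) with ha
  set c := (((n : ℝ) - p) / p) ^ ((p - 1) / p) with hc
  set m := (-a - 1) * (p - 1)
  have hp0 : 0 < p := one_pos.trans hp1
  have hnp : 0 < (n : ℝ) - p := sub_pos.mpr hpn
  have hac : 0 < a * c := mul_pos (div_pos hp0 hnp) (rpow_pos_of_pos (div_pos hnp hp0) _)
  have hu1 : Differentiable ℝ u := hu.differentiable two_ne_zero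
  have hφ : ∀ y, HasDerivAt (fun t => c * t ^ (-a)) (c * (-a * u y ^ (-a - 1))) (u y) := fun y =>
    (hasDerivAt_rpow_const (Or.inl (hpos y).ne')).const_mul c
  have hψ : HasDerivAt (fun t => -(a * c) ^ (p - 1) * t ^ m)
      (-(a * c) ^ (p - 1) * (m * u x ^ (m - 1))) (u x) :=
    (hasDerivAt_rpow_const (Or.inl (hpos x).ne')).const_mul _
  have hgrad_w : gradient ((fun t => c * t ^ (-a)) ∘ u) x
      = (c * (-a * u x ^ (-a - 1))) • gradient u x :=
    ((hφ x).hasGradientAt_comp (hu1 x)).gradient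
  rw [show w = (fun t => c * t ^ (-a)) ∘ u from rfl,
    pLap_comp (φ' := fun t => c * (-a * t ^ (-a - 1))) hp0.ne' hu1 hφ
      (fun y => abs_rpow_sub_two_mul_deriv_rpow hac (hpos y)) hψ (differentiableAt_pLap_flux hu hx),
    hgrad_w, norm_smul, neg_eq_iff_eq_neg.mp (heq x hx), Function.comp_apply, Real.norm_eq_abs]
  exact critical_exponent_identity hp1 hpn ha hc (hpos x) (norm_nonneg _)
end

section
/- For 1 < p < n, a, b > 0 with n·((n−p)/(p−1))^{p−1}·a·b^{p−1} = 1, and x₀ ∈ ℝⁿ, the Aubin–Talenti bubble u(x) = (a + b|x − x₀|^{p/(p−1)})^{−(n−p)/p} satisfies −Δ_p u = u^{np/(n−p) − 1} on ℝⁿ \ {x₀}. -/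
/-!
A radial function `u y = w ‖y - x₀‖` has gradient `w' r • (y - x₀) / r`, so its `p`-flux
`|∇u|^{p-2} ∇u` is `ψ r • (y - x₀) / r` with `ψ = |w'|^{p-2} w'`; taking the divergence
coordinatewise gives the radial formula `Δ_p u = ψ' + (n - 1) ψ / r`.

For the bubble profile `w r = (a + b r^q)^{-m}` with `q = p/(p-1)` and `m = (n-p)/p`, the
relation `(q - 1)(p - 1) = 1` makes the flux profile `ψ r = -C r (a + b r^q)^{-s}`, where
`C = (m b q)^{p-1}` and `s = (m + 1)(p - 1)`. Since `s q = n`, the radial formula collapses to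
`Δ_p u = -n a C (a + b r^q)^{-s-1}`; the normalisation of `a` and `b` says exactly `n a C = 1`,
and `s + 1 = m (np/(n-p) - 1)` identifies `(a + b r^q)^{-s-1}` with the power of `u`.
-/

open Real

section Radial

variable {E : Type*} [NormedAddCommGroup E] [InnerProductSpace ℝ E] {x x₀ : E}

theorem hasFDerivAt_norm_sub (hx : x ≠ x₀) :
    HasFDerivAt (fun y => ‖y - x₀‖) (‖x - x₀‖⁻¹ • innerSL ℝ (x - x₀)) x := by
  have hr : ‖x - x₀‖ ≠ 0 := norm_ne_zero_iff.mpr (sub_ne_zero.mpr hx)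
  have h := (((hasFDerivAt_id x).sub_const x₀).norm_sq).sqrt (pow_ne_zero 2 hr)
  simp only [sqrt_sq (norm_nonneg _)] at h
  refine h.congr_fderiv ?_
  ext v
  simp only [id_eq, one_div, mul_inv_rev, map_sub, ContinuousLinearMap.comp_id, smul_apply,
    sub_apply, coe_innerSL_apply, nsmul_eq_mul, Nat.cast_ofNat, smul_eq_mul]
  field_simp

theorem HasDerivAt.hasFDerivAt_comp_norm_sub {w : ℝ → ℝ} {w' : ℝ}
    (hw : HasDerivAt w w' ‖x - x₀‖) (hx : x ≠ x₀) :
    HasFDerivAt (fun y => w ‖y - x₀‖) ((w' / ‖x - x₀‖) • innerSL ℝ (x - x₀)) x := by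
  refine (hw.comp_hasFDerivAt x (hasFDerivAt_norm_sub hx)).congr_fderiv ?_
  rw [smul_smul, div_eq_mul_inv]

theorem HasDerivAt.hasGradientAt_comp_norm_sub [CompleteSpace E] {w : ℝ → ℝ} {w' : ℝ}
    (hw : HasDerivAt w w' ‖x - x₀‖) (hx : x ≠ x₀) :
    HasGradientAt (fun y => w ‖y - x₀‖) ((w' / ‖x - x₀‖) • (x - x₀)) x := by
  rw [hasGradientAt_iff_hasFDerivAt, map_smul]
  exact hw.hasFDerivAt_comp_norm_sub hx

end Radial

theorem sum_fderiv_mul_sub_apply_single {n : ℕ} {g : EuclideanSpace ℝ (Fin n) → ℝ}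
    {g' : EuclideanSpace ℝ (Fin n) →L[ℝ] ℝ} {x x₀ : EuclideanSpace ℝ (Fin n)}
    (hg : HasFDerivAt g g' x) :
    ∑ i, fderiv ℝ (fun y => g y * (y i - x₀ i)) x (EuclideanSpace.single i 1) =
      n * g x + g' (x - x₀) := by
  have hcoord (i : Fin n) : HasFDerivAt (fun y : EuclideanSpace ℝ (Fin n) => y i - x₀ i)
      (PiLp.proj 2 (fun _ : Fin n => ℝ) i : EuclideanSpace ℝ (Fin n) →L[ℝ] ℝ) x :=
    (PiLp.proj 2 (fun _ : Fin n => ℝ) i : EuclideanSpace ℝ (Fin n) →L[ℝ] ℝ).hasFDerivAt.sub_const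
      (x₀ i)
  have hsum : ∑ i, (x i - x₀ i) * g' (EuclideanSpace.single i 1) = g' (x - x₀) := by
    conv_rhs => rw [← (EuclideanSpace.basisFun (Fin n) ℝ).sum_repr (x - x₀)]
    simp [map_sum]
  have hterm (i : Fin n) : fderiv ℝ (fun y => g y * (y i - x₀ i)) x (EuclideanSpace.single i 1) =
      g x + (x i - x₀ i) * g' (EuclideanSpace.single i 1) := by
    have h : HasFDerivAt (fun y => g y * (y i - x₀ i)) _ x := hg.mul (hcoord i)
    rw [h.fderiv]
    simp
  rw [Finset.sum_congr rfl fun i _ => hterm i, Finset.sum_add_distrib, hsum]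
  simp

theorem pLap_comp_norm_sub {n : ℕ} {p ψ' : ℝ} {w w' : ℝ → ℝ} {x x₀ : EuclideanSpace ℝ (Fin n)}
    (hw : ∀ r, 0 < r → HasDerivAt w (w' r) r)
    (hψ : HasDerivAt (fun r => |w' r| ^ (p - 2) * w' r) ψ' ‖x - x₀‖) (hx : x ≠ x₀) :
    pLap n p (fun y => w ‖y - x₀‖) x =
      ψ' + (n - 1) * (|w' ‖x - x₀‖| ^ (p - 2) * w' ‖x - x₀‖) / ‖x - x₀‖ := by
  set ψ : ℝ → ℝ := fun r => |w' r| ^ (p - 2) * w' r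
  set r := ‖x - x₀‖ with hr_def
  have hr : 0 < r := norm_pos_iff.mpr (sub_ne_zero.mpr hx)
  have hflux (i : Fin n) :
      (fun y => ‖gradient (fun y => w ‖y - x₀‖) y‖ ^ (p - 2) * gradient (fun y => w ‖y - x₀‖) y i)
        =ᶠ[nhds x] fun y => ψ ‖y - x₀‖ / ‖y - x₀‖ * (y i - x₀ i) := by
    filter_upwards [isOpen_compl_singleton.mem_nhds hx] with y hy
    have hry : 0 < ‖y - x₀‖ := norm_pos_iff.mpr (sub_ne_zero.mpr hy)
    rw [((hw _ hry).hasGradientAt_comp_norm_sub hy).gradient, norm_smul, norm_div, norm_norm,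
      div_mul_cancel₀ _ hry.ne', Real.norm_eq_abs]
    simp only [ψ, PiLp.smul_apply, PiLp.sub_apply, smul_eq_mul]
    ring
  have hg : HasFDerivAt (fun y => ψ ‖y - x₀‖ / ‖y - x₀‖)
      (((ψ' * r - ψ r) / r ^ 2 / r) • innerSL ℝ (x - x₀)) x :=
    ((hψ.div (hasDerivAt_id r) hr.ne').congr_deriv (by rw [id, mul_one])).hasFDerivAt_comp_norm_sub
      hx
  unfold pLap
  rw [Finset.sum_congr rfl fun i _ => by rw [(hflux i).fderiv_eq],
    sum_fderiv_mul_sub_apply_single hg]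
  simp only [smul_apply, coe_innerSL_apply, real_inner_self_eq_norm_sq, smul_eq_mul, ← hr_def]
  field_simp
  ring

section Bubble

variable {a b q m r : ℝ}

theorem hasDerivAt_bubbleProfile (ha : 0 < a) (hb : 0 ≤ b) (hr : 0 < r) :
    HasDerivAt (fun r => (a + b * r ^ q) ^ (-m))
      (-(m * b * q) * r ^ (q - 1) * (a + b * r ^ q) ^ (-m - 1)) r := by
  have hφ : 0 < a + b * r ^ q := by positivity
  have h := (((hasDerivAt_rpow_const (p := q) (Or.inl hr.ne')).const_mul b).const_add a).rpow_const
    (p := -m) (Or.inl hφ.ne')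
  convert h using 1
  ring

theorem abs_rpow_mul_bubbleProfile_deriv {p : ℝ} (hp : 1 < p) (hq : (q - 1) * (p - 1) = 1)
    (ha : 0 < a) (hb : 0 < b) (hm : 0 < m) (hr : 0 < r) :
    |-(m * b * q) * r ^ (q - 1) * (a + b * r ^ q) ^ (-m - 1)| ^ (p - 2) *
        (-(m * b * q) * r ^ (q - 1) * (a + b * r ^ q) ^ (-m - 1)) =
      -((m * b * q) ^ (p - 1) * r * (a + b * r ^ q) ^ (-((m + 1) * (p - 1)))) := by
  have hq0 : 0 < q := by nlinarith
  have hφ : 0 < a + b * r ^ q := by positivity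
  set K := m * b * q * r ^ (q - 1) * (a + b * r ^ q) ^ (-m - 1) with hK
  have hK0 : 0 < K := by positivity
  have hKp : K ^ (p - 2) * K = K ^ (p - 1) := by
    rw [← rpow_add_one hK0.ne']
    ring_nf
  rw [show -(m * b * q) * r ^ (q - 1) * (a + b * r ^ q) ^ (-m - 1) = -K by ring, abs_neg,
    abs_of_pos hK0, mul_neg, hKp, hK, mul_rpow (by positivity) (by positivity),
    mul_rpow (by positivity) (by positivity), ← rpow_mul hr.le, ← rpow_mul hφ.le, hq, rpow_one]
  ring_nf

theorem hasDerivAt_bubbleFlux (C s : ℝ) (ha : 0 < a) (hb : 0 ≤ b) (hr : 0 < r) :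
    HasDerivAt (fun r => -(C * r * (a + b * r ^ q) ^ (-s)))
      (-(C * (a + b * r ^ q) ^ (-s)) + C * s * b * q * r ^ q * (a + b * r ^ q) ^ (-s - 1)) r := by
  have h := ((hasDerivAt_id r).const_mul C).mul
    (hasDerivAt_bubbleProfile (q := q) (m := s) ha hb hr)
  refine h.neg.congr_deriv ?_
  rw [id, rpow_sub_one hr.ne']
  field_simp
  ring

theorem pLap_bubble {n : ℕ} {p : ℝ} (hp : 1 < p) (hq : (q - 1) * (p - 1) = 1)
    (hmn : (m + 1) * p = n) (ha : 0 < a) (hb : 0 < b) (hm : 0 < m)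
    {x x₀ : EuclideanSpace ℝ (Fin n)} (hx : x ≠ x₀) :
    pLap n p (fun y => (a + b * ‖y - x₀‖ ^ q) ^ (-m)) x =
      -(n * a * (m * b * q) ^ (p - 1)) *
        (a + b * ‖x - x₀‖ ^ q) ^ (-((m + 1) * (p - 1)) - 1) := by
  set r := ‖x - x₀‖
  have hr : 0 < r := norm_pos_iff.mpr (sub_ne_zero.mpr hx)
  have hφ : 0 < a + b * r ^ q := by positivity
  set C := (m * b * q) ^ (p - 1)
  set s := (m + 1) * (p - 1)
  have hflux : (fun t => |-(m * b * q) * t ^ (q - 1) * (a + b * t ^ q) ^ (-m - 1)| ^ (p - 2) *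
      (-(m * b * q) * t ^ (q - 1) * (a + b * t ^ q) ^ (-m - 1))) =ᶠ[nhds r]
      fun t => -(C * t * (a + b * t ^ q) ^ (-s)) := by
    filter_upwards [lt_mem_nhds hr] with t ht
    exact abs_rpow_mul_bubbleProfile_deriv hp hq ha hb hm ht
  rw [pLap_comp_norm_sub (fun t ht => hasDerivAt_bubbleProfile ha hb.le ht)
    ((hasDerivAt_bubbleFlux C s ha hb.le hr).congr_of_eventuallyEq hflux) hx, hflux.eq_of_nhds]
  have hsq : s * q = n := by linear_combination (m + 1) * hq + hmn
  have hφs : (a + b * r ^ q) ^ (-s) = (a + b * r ^ q) ^ (-s - 1) * (a + b * r ^ q) := by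
    rw [← rpow_add_one hφ.ne', sub_add_cancel]
  rw [hφs, show ‖x - x₀‖ = r from rfl]
  field_simp
  linear_combination C * b * r ^ q * hsq

end Bubble

/-- for `1 < p < n` and `a, b > 0` with
`n ((n-p)/(p-1))^{p-1} a b^{p-1} = 1`, the Aubin–Talenti bubble
`u(x) = (a + b |x - x₀|^{p/(p-1)})^{-(n-p)/p}` satisfies
`-Δ_p u = u^{np/(n-p)-1}` on `ℝⁿ \ {x₀}`. -/
theorem aubin_talenti_solves (n : ℕ) (p : ℝ) (hp1 : 1 < p) (hpn : p < n)
    (a b : ℝ) (ha : 0 < a) (hb : 0 < b)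
    (hab : (n : ℝ) * (((n : ℝ) - p) / (p - 1)) ^ (p - 1) * a * b ^ (p - 1) = 1)
    (x₀ : EuclideanSpace ℝ (Fin n)) :
    let u : EuclideanSpace ℝ (Fin n) → ℝ :=
      fun y => (a + b * ‖y - x₀‖ ^ (p / (p - 1))) ^ (-(((n : ℝ) - p) / p))
    ∀ x, x ≠ x₀ → -pLap n p u x = u x ^ ((n : ℝ) * p / ((n : ℝ) - p) - 1) := by
  intro u x hx
  have hp0 : 0 < p - 1 := by linarith
  have hnp : 0 < (n : ℝ) - p := by linarith
  have hq : (p / (p - 1) - 1) * (p - 1) = 1 := by field_simp; ring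
  have hmn : ((n - p) / p + 1) * p = n := by field_simp; ring
  have hC : n * a * ((n - p) / p * b * (p / (p - 1))) ^ (p - 1) = 1 := by
    rw [show (n - p) / p * b * (p / (p - 1)) = (n - p) / (p - 1) * b by field_simp,
      mul_rpow (by positivity) hb.le]
    linear_combination hab
  have hexp : -(((n - p) / p + 1) * (p - 1)) - 1 = -((n - p) / p) * (n * p / (n - p) - 1) := by
    field_simp
    ring
  rw [pLap_bubble hp1 hq hmn ha hb (by positivity) hx, hC, hexp, rpow_mul (by positivity)]
  ring
end
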